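/- arXiv:2010.16215 — 3 statements merged into one kernel-verified Lean document; each statement's English description precedes it below -/
import Mathlib

section
/- For the sequences {φ_{1,k}}_{k∈ℤ^d} and {ψ_{1,k}}_{k∈ℤ^d} obtained from the Construction, there exist A_φ > 0 and A_ψ > 0 such that ‖Σ_{k∈ℤ^d} c_k φ_{1,k}‖² ≥ A_φ Σ_{k∈ℤ^d} |c_k|² and ‖Σ_{k∈ℤ^d} c_k ψ_{1,k}‖² ≥ A_ψ Σ_{k∈ℤ^d} |c_k|² for all finitely supported sequences {c_k}_{k∈ℤ^d}. -/
open MeasureTheory Real Complex Filter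

noncomputable section

/-- Euclidean space `ℝ^d`. -/
abbrev Rd (d : ℕ) := EuclideanSpace ℝ (Fin d)

/-- The Hilbert space `𝓗 = L²(ℝ^d)`. -/
abbrev Hc (d : ℕ) : Type := Lp ℂ 2 (volume : Measure (Rd d))

/-- The measure `h^d · (counting measure)` on `ℤ^d`, giving the `ℓ²(hℤ^d)` norm. -/
def μd (d : ℕ) (h : ℝ) : Measure (Fin d → ℤ) := ENNReal.ofReal (h ^ d) • Measure.count

/-- The Hilbert space `𝓗_h = ℓ²(hℤ^d)`. -/
abbrev Hd (d : ℕ) (h : ℝ) : Type := Lp ℂ 2 (μd d h)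

/-- The embedding of `ℤ^d` into `ℝ^d`. -/
def zr {d : ℕ} (k : Fin d → ℤ) : Rd d := WithLp.toLp 2 (fun i => (k i : ℝ))

/-- The translated and scaled function `φ_{h,k}(x) = φ0((x - h k)/h)`. -/
def tr {d : ℕ} (φ0 : Rd d → ℂ) (h : ℝ) (k : Fin d → ℤ) : Rd d → ℂ :=
  fun x => φ0 (h⁻¹ • (x - h • zr k))

/-- `F` is the unitary Fourier transform on `L²(ℝ^d)`, with the convention
`(𝓕 f)(ξ) = (2π)^{-d/2} ∫ e^{-i x·ξ} f(x) dx` (characterized on integrable functions). -/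
def IsFourier {d : ℕ} (F : Hc d ≃ₗᵢ[ℂ] Hc d) : Prop :=
  ∀ f : Hc d, Integrable (f : Rd d → ℂ) volume →
    (F f : Rd d → ℂ) =ᵐ[volume]
      fun ξ => (((2 * π) ^ (-(d : ℝ) / 2) : ℝ) : ℂ) *
        ∫ x : Rd d, Complex.exp (-Complex.I * ((inner ℝ x ξ : ℝ) : ℂ)) * f x

/-- `Φ h k` is the `L²` element represented by `φ_{h,k} = φ0((· - hk)/h)`. -/
def IsTransl {d : ℕ} (φ0 : Hc d) (Φ : ℝ → (Fin d → ℤ) → Hc d) : Prop :=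
  ∀ h : ℝ, 0 < h → ∀ k : Fin d → ℤ, (Φ h k : Rd d → ℂ) =ᵐ[volume] tr (φ0 : Rd d → ℂ) h k

/-- Two systems in `L²(ℝ^d)` are biorthogonal: `⟨u_k, v_n⟩ = δ_{k,n}`. -/
def Biorth {d : ℕ} (Φ Ψ : (Fin d → ℤ) → Hc d) : Prop :=
  ∀ k n : Fin d → ℤ, (inner ℂ (Φ k) (Ψ n) : ℂ) = if k = n then 1 else 0

/-- `{Φ k}_{k∈ℤ^d}` is a Riesz sequence in `L²(ℝ^d)`:
`A Σ|c_k|² ≤ ‖Σ c_k Φ k‖² ≤ B Σ|c_k|²` for all `c ∈ ℓ²(ℤ^d)`. -/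
def RieszSeq {d : ℕ} (Φ : (Fin d → ℤ) → Hc d) : Prop :=
  ∃ A B : ℝ, 0 < A ∧ 0 < B ∧
    ∀ c : lp (fun _ : Fin d → ℤ => ℂ) 2, ∃ s : Hc d,
      HasSum (fun k : Fin d → ℤ => c k • Φ k) s ∧
      A * ‖c‖ ^ 2 ≤ ‖s‖ ^ 2 ∧ ‖s‖ ^ 2 ≤ B * ‖c‖ ^ 2

/-- Assumption A: the integer translates of `φ0` and `ψ0` (represented by the
families `Φ 1` and `Ψ 1`) form biorthogonal Riesz sequences in `L²(ℝ^d)`. -/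
def AssumptionA {d : ℕ} (φ0 ψ0 : Hc d) (Φ Ψ : ℝ → (Fin d → ℤ) → Hc d) : Prop :=
  IsTransl φ0 Φ ∧ IsTransl ψ0 Ψ ∧ Biorth (Φ 1) (Ψ 1) ∧ RieszSeq (Φ 1) ∧ RieszSeq (Ψ 1)

/-- The embedding operator `J_h u = Σ_k u(k) φ_{h,k}`. -/
def IsJ {d : ℕ} (Φh : (Fin d → ℤ) → Hc d) (h : ℝ) (J : Hd d h →L[ℂ] Hc d) : Prop :=
  ∀ u : Hd d h, HasSum (fun k : Fin d → ℤ => (u : (Fin d → ℤ) → ℂ) k • Φh k) (J u)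

/-- The discretization operator `(K_h f)(k) = h^{-d} ⟨ψ_{h,k}, f⟩`. -/
def IsK {d : ℕ} (ψ0 : Rd d → ℂ) (h : ℝ) (K : Hc d →L[ℂ] Hd d h) : Prop :=
  ∀ f : Hc d, ∀ k : Fin d → ℤ,
    (K f : (Fin d → ℤ) → ℂ) k
      = ((h ^ d : ℝ) : ℂ)⁻¹ * ∫ x : Rd d, (starRingEnd ℂ) (tr ψ0 h k x) * f x

/-- Assumption B: Assumption A together with essential boundedness of `φ̂0, ψ̂0`,
the support conditions `supp ⊆ [-3π/2, 3π/2]^d` and the lower bounds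
`|φ̂0|, |ψ̂0| ≥ c0 > 0` on `[-π/2, π/2]^d`. -/
def AssumptionB {d : ℕ} (F : Hc d ≃ₗᵢ[ℂ] Hc d) (φ0 ψ0 : Hc d)
    (Φ Ψ : ℝ → (Fin d → ℤ) → Hc d) : Prop :=
  AssumptionA φ0 ψ0 Φ Ψ ∧
  (∃ M : ℝ, (∀ᵐ ξ : Rd d ∂volume, ‖(F φ0 : Rd d → ℂ) ξ‖ ≤ M) ∧
            (∀ᵐ ξ : Rd d ∂volume, ‖(F ψ0 : Rd d → ℂ) ξ‖ ≤ M)) ∧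
  (∀ᵐ ξ : Rd d ∂volume, (¬ ∀ i, |ξ i| ≤ 3 * π / 2) → (F φ0 : Rd d → ℂ) ξ = 0) ∧
  (∀ᵐ ξ : Rd d ∂volume, (¬ ∀ i, |ξ i| ≤ 3 * π / 2) → (F ψ0 : Rd d → ℂ) ξ = 0) ∧
  (∃ c0 : ℝ, 0 < c0 ∧
    (∀ᵐ ξ : Rd d ∂volume, (∀ i, |ξ i| ≤ π / 2) → c0 ≤ ‖(F φ0 : Rd d → ℂ) ξ‖) ∧
    (∀ᵐ ξ : Rd d ∂volume, (∀ i, |ξ i| ≤ π / 2) → c0 ≤ ‖(F ψ0 : Rd d → ℂ) ξ‖))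

/-- Assumption C on the Fourier multiplier `G_0`, with parameters `α, β`. -/
structure AssumptionC (d : ℕ) (G0 : Rd d → ℝ) (α β : ℝ) : Prop where
  halpha : 1 / 2 < α
  hbeta : -(1 / 2 : ℝ) < β
  hab1 : α ≤ 1 + β
  hab2 : 1 + β < 2 * α
  hab3 : 2 * α ≤ 3 + β
  smooth : ContDiff ℝ 1 G0
  nonneg : ∀ ξ : Rd d, 0 ≤ G0 ξ
  zero : G0 0 = 0
  lower : ∃ c : ℝ, 0 < c ∧ ∃ c0 : ℝ, 0 < c0 ∧
    ∀ ξ : Rd d, c0 ≤ ‖ξ‖ → c * ‖ξ‖ ^ α ≤ G0 ξ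
  grad : ∃ c : ℝ, 0 < c ∧ ∀ ξ : Rd d, ‖fderiv ℝ G0 ξ‖ ≤ c * ‖ξ‖ ^ β
  symm : ∀ ξ : Rd d, G0 ξ = G0 (WithLp.toLp 2 (fun i => |ξ i|))

/-- Assumption D on `G_0 = |·|^α + G̃_0`, with parameters `α, β̃`. -/
structure AssumptionD (d : ℕ) (G0 Gt : Rd d → ℝ) (α βt : ℝ) : Prop where
  hbt : 0 ≤ βt
  hab : 1 + βt < 2 * α
  eq : ∀ ξ : Rd d, G0 ξ = ‖ξ‖ ^ α + Gt ξ
  smooth : ContDiff ℝ 1 Gt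
  nonneg : ∀ ξ : Rd d, 0 ≤ Gt ξ
  zero : Gt 0 = 0
  grad : ∃ c : ℝ, 0 < c ∧ ∃ c0 : ℝ, 0 < c0 ∧
    ∀ ξ : Rd d, c0 ≤ ‖ξ‖ → ‖fderiv ℝ Gt ξ‖ ≤ c * ‖ξ‖ ^ βt
  symm : ∀ ξ : Rd d, Gt ξ = Gt (WithLp.toLp 2 (fun i => |ξ i|))

/-- The discretized symbol `G_{0,h}(ξ) = G_0((2/h) sin(hξ_1/2), …, (2/h) sin(hξ_d/2))`. -/
def G0disc {d : ℕ} (G0 : Rd d → ℝ) (h : ℝ) : Rd d → ℝ :=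
  fun ξ => G0 (WithLp.toLp 2 (fun i => 2 / h * Real.sin (h / 2 * ξ i)))

/-- The box `𝕋_h^d = [-π/h, π/h]^d`. -/
def BoxT (d : ℕ) (h : ℝ) : Set (Rd d) := {ξ : Rd d | ∀ i, |ξ i| ≤ π / h}

/-- The Hilbert space `L²(𝕋_h^d)`. -/
abbrev HT (d : ℕ) (h : ℝ) : Type := Lp ℂ 2 (volume.restrict (BoxT d h))

/-- `Fh` is the unitary discrete Fourier transform `𝖥_h : ℓ²(hℤ^d) → L²(𝕋_h^d)`,
`(𝖥_h u)(ξ) = h^d (2π)^{-d/2} Σ_n u(n) e^{-i h n·ξ}` (characterized on finitely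
supported sequences). -/
def IsFh {d : ℕ} (h : ℝ) (Fh : Hd d h ≃ₗᵢ[ℂ] HT d h) : Prop :=
  ∀ u : Hd d h, (Function.support (u : (Fin d → ℤ) → ℂ)).Finite →
    (Fh u : Rd d → ℂ) =ᵐ[volume.restrict (BoxT d h)]
      fun ξ => ((h ^ d * (2 * π) ^ (-(d : ℝ) / 2) : ℝ) : ℂ) *
        ∑' n : Fin d → ℤ, (u : (Fin d → ℤ) → ℂ) n *
          Complex.exp (-Complex.I * (h : ℂ) * ((inner ℝ (zr n) ξ : ℝ) : ℂ))

/-- `R` is the free resolvent `(H_0 - z)^{-1}`: the Fourier multiplier with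
symbol `(G_0(ξ) - z)^{-1}`. -/
def IsFreeResC {d : ℕ} (F : Hc d ≃ₗᵢ[ℂ] Hc d) (G0 : Rd d → ℝ) (z : ℂ)
    (R : Hc d →L[ℂ] Hc d) : Prop :=
  ∀ f : Hc d, (F (R f) : Rd d → ℂ) =ᵐ[volume]
    fun ξ => (((G0 ξ : ℝ) : ℂ) - z)⁻¹ * (F f : Rd d → ℂ) ξ

/-- `R` is the free discrete resolvent `(H_{0,h} - z)^{-1}`: the discrete Fourier
multiplier with symbol `(G_{0,h}(ξ) - z)^{-1}`. -/
def IsFreeResD {d : ℕ} (h : ℝ) (Fh : Hd d h ≃ₗᵢ[ℂ] HT d h) (G0 : Rd d → ℝ) (z : ℂ)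
    (R : Hd d h →L[ℂ] Hd d h) : Prop :=
  ∀ u : Hd d h, (Fh (R u) : Rd d → ℂ) =ᵐ[volume.restrict (BoxT d h)]
    fun ξ => (((G0disc G0 h ξ : ℝ) : ℂ) - z)⁻¹ * (Fh u : Rd d → ℂ) ξ

/-- `H` is the discrete free Hamiltonian `H_{0,h} = 𝖥_h^* G_{0,h}(·) 𝖥_h`. -/
def IsH0d {d : ℕ} (h : ℝ) (Fh : Hd d h ≃ₗᵢ[ℂ] HT d h) (G0 : Rd d → ℝ)
    (H : Hd d h →L[ℂ] Hd d h) : Prop :=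
  ∀ u : Hd d h, (Fh (H u) : Rd d → ℂ) =ᵐ[volume.restrict (BoxT d h)]
    fun ξ => ((G0disc G0 h ξ : ℝ) : ℂ) * (Fh u : Rd d → ℂ) ξ

/-- `W` is the multiplication operator by the discretized potential `V_h(k) = V(hk)`. -/
def IsVd {d : ℕ} (V : Rd d → ℝ) (h : ℝ) (W : Hd d h →L[ℂ] Hd d h) : Prop :=
  ∀ u : Hd d h, ∀ k : Fin d → ℤ,
    (W u : (Fin d → ℤ) → ℂ) k = ((V (h • zr k) : ℝ) : ℂ) * (u : (Fin d → ℤ) → ℂ) k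

/-- `W` is the multiplication operator by `V` on `L²(ℝ^d)`. -/
def IsVc {d : ℕ} (V : Rd d → ℝ) (W : Hc d →L[ℂ] Hc d) : Prop :=
  ∀ f : Hc d, (W f : Rd d → ℂ) =ᵐ[volume] fun x => ((V x : ℝ) : ℂ) * f x

/-- `R` is the resolvent `(H - z)^{-1}` of `H = H_0 + V`: for every `f`,
`(H - z)(R f) = f` (read on the Fourier side), and `H - z` is injective. -/
def IsResC {d : ℕ} (F : Hc d ≃ₗᵢ[ℂ] Hc d) (G0 : Rd d → ℝ) (W : Hc d →L[ℂ] Hc d)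
    (z : ℂ) (R : Hc d →L[ℂ] Hc d) : Prop :=
  (∀ f : Hc d, ∀ᵐ ξ : Rd d ∂volume,
    (((G0 ξ : ℝ) : ℂ) - z) * (F (R f) : Rd d → ℂ) ξ + (F (W (R f)) : Rd d → ℂ) ξ
      = (F f : Rd d → ℂ) ξ) ∧
  (∀ g : Hc d, (∀ᵐ ξ : Rd d ∂volume,
    (((G0 ξ : ℝ) : ℂ) - z) * (F g : Rd d → ℂ) ξ + (F (W g) : Rd d → ℂ) ξ = 0) → g = 0)

/-- `R` is the resolvent `(H_h - z)^{-1}` of the bounded operator `H_h = H_{0,h} + V_h`. -/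
def IsResD {d : ℕ} (h : ℝ) (H0 W : Hd d h →L[ℂ] Hd d h) (z : ℂ)
    (R : Hd d h →L[ℂ] Hd d h) : Prop :=
  (H0 + W - z • ContinuousLinearMap.id ℂ (Hd d h)).comp R = ContinuousLinearMap.id ℂ (Hd d h) ∧
  R.comp (H0 + W - z • ContinuousLinearMap.id ℂ (Hd d h)) = ContinuousLinearMap.id ℂ (Hd d h)

/-- The spectrum of `H = H_0 + V`: the complement of the set of `z` for which a
bounded two-sided resolvent exists. -/
def specC {d : ℕ} (F : Hc d ≃ₗᵢ[ℂ] Hc d) (G0 : Rd d → ℝ) (W : Hc d →L[ℂ] Hc d) : Set ℂ :=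
  {z : ℂ | ¬ ∃ R : Hc d →L[ℂ] Hc d, IsResC F G0 W z R}

/-- The local Hausdorff distance in the compact set `K` between `X` and `Y`,
`max{0, sup_{x∈X∩K} dist(x,Y), sup_{y∈Y∩K} dist(y,X)}` (with `sup ∅ = -∞`). -/
def locHausDist (K X Y : Set ℂ) : ℝ :=
  max 0 (max (sSup ((fun x => Metric.infDist x Y) '' (X ∩ K)))
             (sSup ((fun y => Metric.infDist y X) '' (Y ∩ K))))

/-- Assumption V: `V` is real-valued, bounded, and Hölder continuous of order `θ`. -/
def AssumptionV {d : ℕ} (V : Rd d → ℝ) (θ : ℝ) : Prop :=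
  0 < θ ∧ θ ≤ 1 ∧ (∃ M : ℝ, ∀ x : Rd d, |V x| ≤ M) ∧
    ∃ L : ℝ, ∀ x y : Rd d, |V x - V y| ≤ L * ‖x - y‖ ^ θ



/-- The periodization `v(ξ) = Σ_k u1(ξ-2πk) u2(ξ-2πk)` from the Construction. -/
def ConstrV {d : ℕ} (u1 u2 : Rd d → ℝ) : Rd d → ℝ :=
  fun ξ => ∑' k : Fin d → ℤ, u1 (ξ - (2 * π) • zr k) * u2 (ξ - (2 * π) • zr k)

/-- The Construction of section 2.1: `u1, u2 ∈ C_0^∞`, `0 ≤ u_j ≤ 1`, `u_j = 1` on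
`[-π,π]^d`, `supp u_j ⊆ [-3π/2,3π/2]^d`, and `φ̂0 = (2π)^{-d/2} u1/√v`,
`ψ̂0 = (2π)^{-d/2} u2/√v`. -/
def Construction (d : ℕ) (u1 u2 : Rd d → ℝ) (F : Hc d ≃ₗᵢ[ℂ] Hc d) (φ0 ψ0 : Hc d) : Prop :=
  IsFourier F ∧
  ContDiff ℝ (⊤ : ℕ∞) u1 ∧ ContDiff ℝ (⊤ : ℕ∞) u2 ∧
  HasCompactSupport u1 ∧ HasCompactSupport u2 ∧
  (∀ ξ : Rd d, 0 ≤ u1 ξ ∧ u1 ξ ≤ 1) ∧ (∀ ξ : Rd d, 0 ≤ u2 ξ ∧ u2 ξ ≤ 1) ∧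
  (∀ ξ : Rd d, (∀ i, |ξ i| ≤ π) → u1 ξ = 1) ∧
  (∀ ξ : Rd d, (∀ i, |ξ i| ≤ π) → u2 ξ = 1) ∧
  tsupport u1 ⊆ {ξ : Rd d | ∀ i, |ξ i| ≤ 3 * π / 2} ∧
  tsupport u2 ⊆ {ξ : Rd d | ∀ i, |ξ i| ≤ 3 * π / 2} ∧
  ((F φ0 : Rd d → ℂ) =ᵐ[volume]
    fun ξ => (((2 * π) ^ (-(d : ℝ) / 2) * u1 ξ / Real.sqrt (ConstrV u1 u2 ξ) : ℝ) : ℂ)) ∧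
  ((F ψ0 : Rd d → ℂ) =ᵐ[volume]
    fun ξ => (((2 * π) ^ (-(d : ℝ) / 2) * u2 ξ / Real.sqrt (ConstrV u1 u2 ξ) : ℝ) : ℂ))


namespace S5

lemma tr_one {d : ℕ} (f : Rd d → ℂ) (k : Fin d → ℤ) (x : Rd d) :
    tr f 1 k x = f (x - zr k) := by simp [tr]

lemma coe_sum {d : ℕ} (s : Finset (Fin d → ℤ)) (g : (Fin d → ℤ) → Hc d) :
    ((s.sum g : Hc d) : Rd d → ℂ) =ᵐ[volume] fun x => ∑ k ∈ s, (g k : Rd d → ℂ) x := by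
  classical
  induction s using Finset.induction_on with
  | empty => simpa [Pi.zero_def] using Lp.coeFn_zero (E := ℂ) (p := 2) (μ := (volume : Measure (Rd d)))
  | insert _ _ hk ih =>
      rename_i a s'
      rw [Finset.sum_insert hk]
      filter_upwards [Lp.coeFn_add (g a) (s'.sum g), ih] with x h1 h2
      rw [h1]
      simp only [Pi.add_apply, h2, Finset.sum_insert hk]

lemma normsq {d : ℕ} (g : Hc d) : ∫ x : Rd d, ‖(g : Rd d → ℂ) x‖ ^ 2 = ‖g‖ ^ 2 := by
  have h1 : (‖g‖ : ℝ) ^ 2 = RCLike.re (inner ℂ g g : ℂ) := by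
    rw [@inner_self_eq_norm_sq ℂ]
  rw [h1, MeasureTheory.L2.inner_def]
  rw [← integral_re (L2.integrable_inner g g)]
  refine integral_congr_ae (Eventually.of_forall fun x => ?_)
  simp only [RCLike.inner_apply, Complex.mul_re, Complex.conj_re, Complex.conj_im,
    Complex.sq_norm, Complex.normSq_apply, RCLike.re_to_complex]
  ring

lemma integrable_normsq {d : ℕ} (g : Hc d) :
    Integrable (fun x : Rd d => ‖(g : Rd d → ℂ) x‖ ^ 2) volume := by
  have := (L2.integrable_inner (𝕜 := ℂ) g g).re
  refine this.congr (Eventually.of_forall fun x => ?_)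
  simp only [RCLike.inner_apply, Complex.mul_re, Complex.conj_re, Complex.conj_im,
    Complex.sq_norm, Complex.normSq_apply, RCLike.re_to_complex]
  ring


def mfn {d : ℕ} (k : Fin d → ℤ) (ξ : Rd d) : ℂ :=
  Complex.exp (-Complex.I * ((inner ℝ (zr k) ξ : ℝ) : ℂ))

lemma mfn_norm {d : ℕ} (k : Fin d → ℤ) (ξ : Rd d) : ‖mfn k ξ‖ = 1 := by
  simp [mfn, Complex.norm_exp]

lemma mfn_cont {d : ℕ} (k : Fin d → ℤ) : Continuous (mfn k) := by
  unfold mfn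
  exact Complex.continuous_exp.comp (continuous_const.mul
    (Complex.continuous_ofReal.comp (Continuous.inner continuous_const continuous_id)))

lemma memMk {d : ℕ} (k : Fin d → ℤ) (a : Hc d) :
    MemLp (fun ξ => mfn k ξ * (a : Rd d → ℂ) ξ) 2 volume := by
  refine ⟨((mfn_cont k).aestronglyMeasurable).mul (Lp.aestronglyMeasurable a), ?_⟩
  have : eLpNorm (fun ξ => mfn k ξ * (a : Rd d → ℂ) ξ) 2 volume
      = eLpNorm (a : Rd d → ℂ) 2 volume := by
    apply eLpNorm_congr_norm_ae
    filter_upwards with ξ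
    rw [norm_mul, mfn_norm, one_mul]
  rw [this]; exact Lp.eLpNorm_lt_top a

def Mk {d : ℕ} (k : Fin d → ℤ) (a : Hc d) : Hc d := (memMk k a).toLp _

lemma Mk_coe {d : ℕ} (k : Fin d → ℤ) (a : Hc d) :
    (Mk k a : Rd d → ℂ) =ᵐ[volume] fun ξ => mfn k ξ * (a : Rd d → ℂ) ξ :=
  MemLp.coeFn_toLp _

lemma Mk_dist {d : ℕ} (k : Fin d → ℤ) (a b : Hc d) : dist (Mk k a) (Mk k b) = dist a b := by
  rw [Lp.dist_def, Lp.dist_def]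
  congr 1
  have h1 : ((Mk k a : Hc d) : Rd d → ℂ) - ((Mk k b : Hc d) : Rd d → ℂ)
      =ᵐ[volume] fun ξ => mfn k ξ * ((a : Rd d → ℂ) ξ - (b : Rd d → ℂ) ξ) := by
    filter_upwards [Mk_coe k a, Mk_coe k b] with ξ h1 h2
    simp only [Pi.sub_apply, h1, h2]; ring
  have h2 : ((a : Hc d) : Rd d → ℂ) - ((b : Hc d) : Rd d → ℂ)
      =ᵐ[volume] fun ξ => (a : Rd d → ℂ) ξ - (b : Rd d → ℂ) ξ := by
    filter_upwards with ξ; rfl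
  rw [eLpNorm_congr_ae h1, eLpNorm_congr_ae h2]
  apply eLpNorm_congr_norm_ae
  filter_upwards with ξ
  rw [norm_mul, mfn_norm, one_mul]

def Tk {d : ℕ} (k : Fin d → ℤ) : Hc d →+ Hc d :=
  Lp.compMeasurePreserving (fun x => x - zr k) (measurePreserving_sub_right volume (zr k))

lemma Tk_coe {d : ℕ} (k : Fin d → ℤ) (f : Hc d) :
    (Tk k f : Rd d → ℂ) =ᵐ[volume] fun x => (f : Rd d → ℂ) (x - zr k) :=
  Lp.coeFn_compMeasurePreserving f _

lemma Tk_dist {d : ℕ} (k : Fin d → ℤ) (a b : Hc d) : dist (Tk k a) (Tk k b) = dist a b := by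
  rw [dist_eq_norm, ← map_sub, dist_eq_norm]
  exact Lp.norm_compMeasurePreserving _ _

lemma key {d : ℕ} (F : Hc d ≃ₗᵢ[ℂ] Hc d) (hF : IsFourier F) (f : Hc d) (k : Fin d → ℤ) :
    F (Tk k f) = Mk k (F f) := by
  refine eq_of_dist_eq_zero (le_antisymm ?_ dist_nonneg)
  have main : ∀ ε : ℝ, 0 < ε → dist (F (Tk k f)) (Mk k (F f)) ≤ 2 * ε := by
    intro ε hε
    obtain ⟨g, gsupp, hg, gcont, gmem⟩ :=
      (Lp.memLp f).exists_hasCompactSupport_eLpNorm_sub_le (p := 2)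
        (by norm_num) (ε := ENNReal.ofReal ε) (ENNReal.ofReal_pos.mpr hε).ne'
    set g' : Hc d := gmem.toLp g with hg'
    -- dist f g' ≤ ε
    have hfg' : dist f g' ≤ ε := by
      rw [Lp.dist_def]
      have : ((f : Hc d) : Rd d → ℂ) - (g' : Rd d → ℂ) =ᵐ[volume] (f : Rd d → ℂ) - g := by
        filter_upwards [gmem.coeFn_toLp] with x hx
        simp only [Pi.sub_apply, hg', hx]
      rw [eLpNorm_congr_ae this]
      exact ENNReal.toReal_le_of_le_ofReal hε.le hg
    -- middle equality
    have gInt : Integrable g volume := gcont.integrable_of_hasCompactSupport gsupp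
    have mid : F (Tk k g') = Mk k (F g') := by
      apply Lp.ext
      -- coe (Tk g') =ᵐ translate of g
      have htr : (Tk k g' : Rd d → ℂ) =ᵐ[volume] fun x => g (x - zr k) := by
        have h0 : ((g' : Rd d → ℂ) ∘ (fun x : Rd d => x - zr k))
            =ᵐ[volume] (g ∘ (fun x : Rd d => x - zr k)) :=
          (measurePreserving_sub_right volume (zr k)).quasiMeasurePreserving.ae_eq_comp
            gmem.coeFn_toLp
        filter_upwards [Tk_coe k g', h0] with x h1 h2
        rw [h1]; exact h2
      have gtrInt : Integrable (Tk k g' : Rd d → ℂ) volume :=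
        by
        have : Integrable (fun x : Rd d => g (x - zr k)) volume :=
          (measurePreserving_sub_right volume (zr k)).integrable_comp_emb
            (MeasurableEquiv.subRight (zr k)).measurableEmbedding |>.mpr gInt
        exact this.congr htr.symm
      have e1 := hF (Tk k g') gtrInt
      have e2 := hF g' (gInt.congr gmem.coeFn_toLp.symm)
      have step1 : ∀ ξ : Rd d, ∫ x : Rd d, Complex.exp (-Complex.I * ((inner ℝ x ξ : ℝ) : ℂ)) *
          (Tk k g' : Rd d → ℂ) x
          = ∫ x : Rd d, Complex.exp (-Complex.I * ((inner ℝ x ξ : ℝ) : ℂ)) * g (x - zr k) := by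
        intro ξ
        refine integral_congr_ae (htr.mono fun x hx => ?_)
        simp only [hx]
      have step2 : ∀ ξ : Rd d, ∫ x : Rd d, Complex.exp (-Complex.I * ((inner ℝ x ξ : ℝ) : ℂ)) *
          g (x - zr k)
          = mfn k ξ * ∫ x : Rd d, Complex.exp (-Complex.I * ((inner ℝ x ξ : ℝ) : ℂ)) * g x := by
        intro ξ
        rw [← integral_add_right_eq_self
          (fun x : Rd d => Complex.exp (-Complex.I * ((inner ℝ x ξ : ℝ) : ℂ)) * g (x - zr k))
          (zr k)]
        rw [← integral_const_mul]
        congr 1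
        ext y
        have hin : (inner ℝ (y + zr k) ξ : ℝ) = (inner ℝ y ξ : ℝ) + (inner ℝ (zr k) ξ : ℝ) :=
          inner_add_left _ _ _
        simp only [add_sub_cancel_right, hin, Complex.ofReal_add, mul_add, Complex.exp_add, mfn]
        ring
      have step3 : ∀ ξ : Rd d, ∫ x : Rd d, Complex.exp (-Complex.I * ((inner ℝ x ξ : ℝ) : ℂ)) *
          (g' : Rd d → ℂ) x
          = ∫ x : Rd d, Complex.exp (-Complex.I * ((inner ℝ x ξ : ℝ) : ℂ)) * g x := by
        intro ξ
        refine integral_congr_ae (gmem.coeFn_toLp.mono fun x hx => ?_)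
        simp only [hg', hx]
      filter_upwards [e1, e2, Mk_coe k (F g')] with ξ h1 h2 h3
      rw [h1, h3, h2, step1 ξ, step2 ξ, step3 ξ]
      ring
    -- triangle inequality
    calc dist (F (Tk k f)) (Mk k (F f))
        ≤ dist (F (Tk k f)) (F (Tk k g')) + dist (F (Tk k g')) (Mk k (F f)) := dist_triangle _ _ _
      _ ≤ dist (F (Tk k f)) (F (Tk k g')) + (dist (F (Tk k g')) (Mk k (F g'))
            + dist (Mk k (F g')) (Mk k (F f))) := by
          gcongr; exact dist_triangle _ _ _
      _ = dist f g' + (0 + dist g' f) := by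
          rw [F.dist_map, Tk_dist, mid, dist_self, Mk_dist, F.dist_map]
      _ ≤ ε + (0 + ε) := by
          have := hfg'
          have h2 : dist g' f ≤ ε := by rwa [dist_comm]
          gcongr
      _ = 2 * ε := by ring
  by_contra hlt
  push_neg at hlt
  have h3 := main (dist (F (Tk k f)) (Mk k (F f)) / 3) (by linarith)
  linarith


def Qr (d : ℕ) (r : ℝ) : Set (Rd d) := {ξ : Rd d | ∀ i, |ξ i| ≤ r}

lemma oneD (r : ℝ) (hr : 0 ≤ r) (j : ℤ)
    (hx : Complex.exp (Complex.I * j * r) * Complex.exp (Complex.I * j * r) = 1) :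
    ∫ t in Set.Icc (-r) r, Complex.exp (Complex.I * j * t)
      = if j = 0 then ((2 * r : ℝ) : ℂ) else 0 := by
  have hle : (-r : ℝ) ≤ r := by linarith
  rw [MeasureTheory.integral_Icc_eq_integral_Ioc, ← intervalIntegral.integral_of_le hle]
  by_cases hj : j = 0
  · subst hj
    simp only [Int.cast_zero, mul_zero, zero_mul, Complex.exp_zero, if_true]
    rw [intervalIntegral.integral_const]
    push_cast
    ring_nf
    simp [two_mul]
  · rw [if_neg hj]
    have hc : Complex.I * (j : ℂ) ≠ 0 := by
      simp [Complex.I_ne_zero, Int.cast_injective.ne_iff.mpr hj]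
      exact_mod_cast hj
    have := integral_exp_mul_complex (a := -r) (b := r) hc
    simp only [mul_assoc] at this ⊢
    rw [this]
    have h2 : Complex.exp (Complex.I * ((j : ℂ) * (-r : ℝ)))
        = (Complex.exp (Complex.I * ((j : ℂ) * (r : ℝ))))⁻¹ := by
      rw [← Complex.exp_neg]
      push_cast
      ring_nf
    rw [h2]
    have h3 : (Complex.exp (Complex.I * ((j : ℂ) * (r : ℝ))))⁻¹
        = Complex.exp (Complex.I * ((j : ℂ) * (r : ℝ))) := by
      have := hx
      field_simp
      rw [← this]
      ring_nf
    rw [h3, sub_self, zero_div]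

lemma cube_int (d : ℕ) (r : ℝ) (hr : 0 ≤ r)
    (hx : ∀ j : ℤ, Complex.exp (Complex.I * j * r) * Complex.exp (Complex.I * j * r) = 1)
    (n : Fin d → ℤ) :
    ∫ ξ in Qr d r, Complex.exp (Complex.I * ((inner ℝ (zr n) ξ : ℝ) : ℂ))
      = if n = 0 then (((2 * r) ^ d : ℝ) : ℂ) else 0 := by
  classical
  have hinner : ∀ ξ : Rd d, (inner ℝ (zr n) ξ : ℝ) = ∑ i, (n i : ℝ) * ξ i := by
    intro ξ
    simp [PiLp.inner_apply, RCLike.inner_apply, zr, mul_comm]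
  have hprod : ∀ ξ : Rd d, Complex.exp (Complex.I * ((inner ℝ (zr n) ξ : ℝ) : ℂ))
      = ∏ i, Complex.exp (Complex.I * (n i : ℂ) * (ξ i : ℂ)) := by
    intro ξ
    rw [hinner, ← Complex.exp_sum]
    congr 1
    push_cast
    rw [Finset.mul_sum]
    congr 1; ext i; ring
  simp_rw [hprod]
  -- transfer to Pi type
  set e := (MeasurableEquiv.toLp 2 (Fin d → ℝ)).symm with he
  set S : Set (Fin d → ℝ) := Set.univ.pi fun _ => Set.Icc (-r) r with hS
  have hQ : Qr d r = e ⁻¹' S := by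
    ext ξ
    simp [Qr, hS, abs_le, e, Set.mem_pi, Pi.le_def]
    exact forall_and
  have hMS : MeasurableSet S := MeasurableSet.univ_pi fun _ => measurableSet_Icc
  have htrans := (EuclideanSpace.volume_preserving_symm_measurableEquiv_toLp (Fin d)).setIntegral_preimage_emb
      (MeasurableEquiv.measurableEmbedding _)
      (fun y : Fin d → ℝ => ∏ i, Complex.exp (Complex.I * (n i : ℂ) * (y i : ℂ))) S
  rw [hQ]
  rw [show (fun ξ : Rd d => ∏ i, Complex.exp (Complex.I * (n i : ℂ) * (ξ i : ℂ)))
      = fun ξ : Rd d => ∏ i, Complex.exp (Complex.I * (n i : ℂ) * ((e ξ) i : ℂ)) from rfl]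
  rw [htrans]
  -- now on Pi type
  rw [← MeasureTheory.integral_indicator hMS]
  have hind : ∀ y : Fin d → ℝ,
      S.indicator (fun y => ∏ i, Complex.exp (Complex.I * (n i : ℂ) * (y i : ℂ))) y
      = ∏ i, (Set.Icc (-r) r).indicator
          (fun t : ℝ => Complex.exp (Complex.I * (n i : ℂ) * (t : ℂ))) (y i) := by
    intro y
    by_cases hy : y ∈ S
    · rw [Set.indicator_of_mem hy]
      refine Finset.prod_congr rfl fun i _ => ?_
      rw [Set.indicator_of_mem (hy i (Set.mem_univ i))]
    · rw [Set.indicator_of_notMem hy]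
      obtain ⟨i, hi⟩ : ∃ i, y i ∉ Set.Icc (-r) r := by
        by_contra h
        push_neg at h
        exact hy fun i _ => h i
      exact (Finset.prod_eq_zero (Finset.mem_univ i)
        (Set.indicator_of_notMem hi _)).symm
  simp_rw [hind]
  rw [MeasureTheory.integral_fintype_prod_volume_eq_prod
    (f := fun i t => (Set.Icc (-r) r).indicator
      (fun t : ℝ => Complex.exp (Complex.I * (n i : ℂ) * (t : ℂ))) t)]
  have hfac : ∀ i, (∫ t : ℝ, (Set.Icc (-r) r).indicator
      (fun t : ℝ => Complex.exp (Complex.I * (n i : ℂ) * (t : ℂ))) t)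
      = if n i = 0 then ((2 * r : ℝ) : ℂ) else 0 := by
    intro i
    rw [MeasureTheory.integral_indicator measurableSet_Icc]
    exact oneD r hr (n i) (hx (n i))
  simp_rw [hfac]
  by_cases hn : n = 0
  · subst hn
    have h0 : ∀ i : Fin d, (if (0 : Fin d → ℤ) i = 0 then ((2 * r : ℝ) : ℂ) else 0)
        = ((2 * r : ℝ) : ℂ) := fun i => if_pos rfl
    simp_rw [h0]
    rw [Finset.prod_const, Finset.card_univ, Fintype.card_fin, if_true]
    push_cast
    ring
  · obtain ⟨i, hi⟩ : ∃ i, n i ≠ 0 := by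
      by_contra h
      push_neg at h
      exact hn (funext h)
    rw [if_neg hn]
    exact Finset.prod_eq_zero (Finset.mem_univ i) (if_neg hi)


lemma Qr_meas {d : ℕ} {r : ℝ} : MeasurableSet (Qr d r) := by
  have : Qr d r = ⋂ i, (fun ξ : Rd d => ξ i) ⁻¹' (Set.Icc (-r) r) := by
    ext ξ; simp [Qr, abs_le, Set.mem_iInter]
  rw [this]
  exact MeasurableSet.iInter fun i =>
    ((EuclideanSpace.proj (𝕜 := ℝ) i).continuous.measurable) measurableSet_Icc

lemma Qr_vol_lt {d : ℕ} {r : ℝ} (hr : 0 ≤ r) : volume (Qr d r) < ⊤ := by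
  set e := (MeasurableEquiv.toLp 2 (Fin d → ℝ)).symm
  set S : Set (Fin d → ℝ) := Set.univ.pi fun _ => Set.Icc (-r) r with hS
  have hQ : Qr d r = e ⁻¹' S := by
    ext ξ
    simp [Qr, hS, abs_le, e, Set.mem_pi, Pi.le_def]
    exact forall_and
  have hMS : MeasurableSet S := MeasurableSet.univ_pi fun _ => measurableSet_Icc
  rw [hQ, (EuclideanSpace.volume_preserving_symm_measurableEquiv_toLp (Fin d)).measure_preimage
    hMS.nullMeasurableSet]
  rw [hS, volume_pi_pi]
  simp [Real.volume_Icc]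

lemma cube_msq (d : ℕ) (r : ℝ) (hr : 0 ≤ r)
    (hx : ∀ j : ℤ, Complex.exp (Complex.I * j * r) * Complex.exp (Complex.I * j * r) = 1)
    (s : Finset (Fin d → ℤ)) (c : (Fin d → ℤ) → ℂ) :
    ∫ ξ in Qr d r, ‖∑ k ∈ s, c k * mfn k ξ‖ ^ 2
      = (2 * r) ^ d * ∑ k ∈ s, ‖c k‖ ^ 2 := by
  classical
  haveI : IsFiniteMeasure (volume.restrict (Qr d r)) :=
    ⟨by rw [Measure.restrict_apply_univ]; exact Qr_vol_lt hr⟩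
  set μ := volume.restrict (Qr d r) with hμ
  -- pointwise expansion
  have expand : ∀ ξ : Rd d,
      (starRingEnd ℂ) (∑ k ∈ s, c k * mfn k ξ) * (∑ n ∈ s, c n * mfn n ξ)
      = ∑ k ∈ s, ∑ n ∈ s, ((starRingEnd ℂ) (c k) * c n) *
          Complex.exp (Complex.I * ((inner ℝ (zr (k - n)) ξ : ℝ) : ℂ)) := by
    intro ξ
    rw [map_sum, Finset.sum_mul_sum]
    refine Finset.sum_congr rfl fun k _ => Finset.sum_congr rfl fun n _ => ?_
    rw [map_mul]
    have h1 : (starRingEnd ℂ) (mfn k ξ) * mfn n ξ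
        = Complex.exp (Complex.I * ((inner ℝ (zr (k - n)) ξ : ℝ) : ℂ)) := by
      unfold mfn
      rw [← Complex.exp_conj, ← Complex.exp_add]
      congr 1
      have hz : zr (k - n) = zr k - zr n := by
        ext i
        show ((k i - n i : ℤ) : ℝ) = zr k i - zr n i
        push_cast
        rfl
      have hi : (inner ℝ (zr (k - n)) ξ : ℝ) = (inner ℝ (zr k) ξ : ℝ) - (inner ℝ (zr n) ξ : ℝ) := by
        rw [hz, inner_sub_left]
      rw [hi]
      simp [Complex.ofReal_sub]
      ring
    calc (starRingEnd ℂ) (c k) * (starRingEnd ℂ) (mfn k ξ) * (c n * mfn n ξ)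
        = ((starRingEnd ℂ) (c k) * c n) * ((starRingEnd ℂ) (mfn k ξ) * mfn n ξ) := by ring
      _ = _ := by rw [h1]
  -- integrability of each term
  have integ : ∀ k n : Fin d → ℤ, Integrable (fun ξ : Rd d =>
      ((starRingEnd ℂ) (c k) * c n) *
        Complex.exp (Complex.I * ((inner ℝ (zr (k - n)) ξ : ℝ) : ℂ))) μ := by
    intro k n
    have hcont : Continuous (fun ξ : Rd d =>
        ((starRingEnd ℂ) (c k) * c n) *
          Complex.exp (Complex.I * ((inner ℝ (zr (k - n)) ξ : ℝ) : ℂ))) := by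
      exact continuous_const.mul (Complex.continuous_exp.comp (continuous_const.mul
        (Complex.continuous_ofReal.comp (Continuous.inner continuous_const continuous_id))))
    refine (integrable_const (‖c k‖ * ‖c n‖)).mono' hcont.aestronglyMeasurable ?_
    filter_upwards with ξ
    rw [norm_mul, norm_mul]
    have : ‖Complex.exp (Complex.I * ((inner ℝ (zr (k - n)) ξ : ℝ) : ℂ))‖ = 1 := by
      simp [Complex.norm_exp]
    rw [this, mul_one, RCLike.norm_conj]
  -- complex integral
  have J : ∫ ξ in Qr d r, (starRingEnd ℂ) (∑ k ∈ s, c k * mfn k ξ) * (∑ n ∈ s, c n * mfn n ξ)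
      = (((2 * r) ^ d : ℝ) : ℂ) * ∑ k ∈ s, ((starRingEnd ℂ) (c k) * c k) := by
    rw [integral_congr_ae (Eventually.of_forall expand)]
    rw [integral_finset_sum _ (fun k _ => integrable_finset_sum _ (fun n _ => integ k n))]
    have hin : ∀ k ∈ s, ∫ ξ, (∑ n ∈ s, ((starRingEnd ℂ) (c k) * c n) *
        Complex.exp (Complex.I * ((inner ℝ (zr (k - n)) ξ : ℝ) : ℂ))) ∂μ
        = ((starRingEnd ℂ) (c k) * c k) * (((2 * r) ^ d : ℝ) : ℂ) := by
      intro k hk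
      rw [integral_finset_sum _ (fun n _ => integ k n)]
      have hterm : ∀ n ∈ s, ∫ ξ, ((starRingEnd ℂ) (c k) * c n) *
          Complex.exp (Complex.I * ((inner ℝ (zr (k - n)) ξ : ℝ) : ℂ)) ∂μ
          = ((starRingEnd ℂ) (c k) * c n) *
              (if k - n = 0 then (((2 * r) ^ d : ℝ) : ℂ) else 0) := by
        intro n _
        rw [integral_const_mul, hμ]
        congr 1
        exact cube_int d r hr hx (k - n)
      rw [Finset.sum_congr rfl hterm]
      have : ∀ n ∈ s, ((starRingEnd ℂ) (c k) * c n) *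
          (if k - n = 0 then (((2 * r) ^ d : ℝ) : ℂ) else 0)
          = if n = k then ((starRingEnd ℂ) (c k) * c n) * (((2 * r) ^ d : ℝ) : ℂ) else 0 := by
        intro n _
        by_cases h : n = k
        · subst h; simp
        · rw [if_neg h, if_neg (fun hc => h (sub_eq_zero.mp hc).symm), mul_zero]
      rw [Finset.sum_congr rfl this, Finset.sum_ite_eq' s k
        (fun n => ((starRingEnd ℂ) (c k) * c n) * (((2 * r) ^ d : ℝ) : ℂ)), if_pos ‹k ∈ s›]
    rw [Finset.sum_congr rfl hin, ← Finset.sum_mul]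
    ring
  -- take real parts
  have hintg : Integrable (fun ξ : Rd d =>
      (starRingEnd ℂ) (∑ k ∈ s, c k * mfn k ξ) * (∑ n ∈ s, c n * mfn n ξ)) μ := by
    have h1 : Integrable (fun ξ : Rd d => ∑ k ∈ s, ∑ n ∈ s, ((starRingEnd ℂ) (c k) * c n) *
        Complex.exp (Complex.I * ((inner ℝ (zr (k - n)) ξ : ℝ) : ℂ))) μ :=
      integrable_finset_sum _ (fun k _ => integrable_finset_sum _ (fun n _ => integ k n))
    exact h1.congr (Eventually.of_forall fun ξ => (expand ξ).symm)
  have hre : (∫ ξ in Qr d r, ‖∑ k ∈ s, c k * mfn k ξ‖ ^ 2)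
      = RCLike.re (∫ ξ in Qr d r, (starRingEnd ℂ) (∑ k ∈ s, c k * mfn k ξ) *
          (∑ n ∈ s, c n * mfn n ξ)) := by
    rw [← integral_re hintg]
    refine integral_congr_ae (Eventually.of_forall fun ξ => ?_)
    simp only [Complex.mul_re, Complex.conj_re, Complex.conj_im, 
      Complex.sq_norm, Complex.normSq_apply, RCLike.re_to_complex]
    ring

  have hc2 : ∑ k ∈ s, ((starRingEnd ℂ) (c k) * c k)
      = ((∑ k ∈ s, ‖c k‖ ^ 2 : ℝ) : ℂ) := by
    rw [Complex.ofReal_sum]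
    refine Finset.sum_congr rfl fun k _ => ?_
    rw [Complex.conj_mul']
    norm_cast
  rw [hre, J, hc2, ← Complex.ofReal_mul, RCLike.re_to_complex, Complex.ofReal_re]


lemma shift_apply {d : ℕ} (ξ : Rd d) (k : Fin d → ℤ) (i : Fin d) :
    (ξ - (2 * π) • zr k) i = ξ i - 2 * π * (k i : ℝ) := by
  simp [zr, mul_assoc]

variable {d : ℕ} {u1 u2 : Rd d → ℝ}

def KS (ξ : Rd d) : Finset (Fin d → ℤ) :=
  Fintype.piFinset fun i => Finset.Icc ⌈(ξ i - 3 * π / 2) / (2 * π)⌉ ⌊(ξ i + 3 * π / 2) / (2 * π)⌋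

lemma term_zero (h1 : tsupport u1 ⊆ {ξ : Rd d | ∀ i, |ξ i| ≤ 3 * π / 2})
    (ξ : Rd d) (k : Fin d → ℤ) (hk : k ∉ KS ξ) :
    u1 (ξ - (2 * π) • zr k) * u2 (ξ - (2 * π) • zr k) = 0 := by
  rcases eq_or_ne (u1 (ξ - (2 * π) • zr k)) 0 with h | h
  · rw [h, zero_mul]
  exfalso
  apply hk
  have hmem : (ξ - (2 * π) • zr k) ∈ tsupport u1 := subset_tsupport u1 h
  have hb := h1 hmem
  simp only [KS, Fintype.mem_piFinset]
  intro i
  have hi := hb i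
  rw [shift_apply, abs_le] at hi
  have hπ : (0:ℝ) < 2 * π := by positivity
  rw [Finset.mem_Icc]
  constructor
  · rw [Int.ceil_le]
    rw [div_le_iff₀ hπ]
    linarith [hi.2]
  · rw [Int.le_floor]
    rw [le_div_iff₀ hπ]
    linarith [hi.1]

lemma constrV_summable (h1 : tsupport u1 ⊆ {ξ : Rd d | ∀ i, |ξ i| ≤ 3 * π / 2}) (ξ : Rd d) :
    Summable fun k : Fin d → ℤ => u1 (ξ - (2 * π) • zr k) * u2 (ξ - (2 * π) • zr k) :=
  summable_of_ne_finset_zero (s := KS ξ) (fun k hk => term_zero h1 ξ k hk)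

lemma constrV_ge_one (h1 : tsupport u1 ⊆ {ξ : Rd d | ∀ i, |ξ i| ≤ 3 * π / 2})
    (hu1 : ∀ ξ : Rd d, 0 ≤ u1 ξ) (hu2 : ∀ ξ : Rd d, 0 ≤ u2 ξ)
    (hone1 : ∀ ξ : Rd d, (∀ i, |ξ i| ≤ π) → u1 ξ = 1)
    (hone2 : ∀ ξ : Rd d, (∀ i, |ξ i| ≤ π) → u2 ξ = 1)
    (ξ : Rd d) (hξ : ∀ i, |ξ i| ≤ π) : 1 ≤ ConstrV u1 u2 ξ := by
  have h0 : ξ - (2 * π) • zr 0 = ξ := by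
    have : zr (0 : Fin d → ℤ) = 0 := by ext i; simp [zr]
    rw [this, smul_zero, sub_zero]
  have hterm : u1 (ξ - (2 * π) • zr 0) * u2 (ξ - (2 * π) • zr 0) = 1 := by
    rw [h0, hone1 ξ hξ, hone2 ξ hξ, mul_one]
  calc (1:ℝ) = u1 (ξ - (2 * π) • zr 0) * u2 (ξ - (2 * π) • zr 0) := hterm.symm
    _ ≤ ConstrV u1 u2 ξ :=
        Summable.le_tsum (constrV_summable h1 ξ) 0 (fun k _ => mul_nonneg (hu1 _) (hu2 _))

lemma constrV_le (h1 : tsupport u1 ⊆ {ξ : Rd d | ∀ i, |ξ i| ≤ 3 * π / 2})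
    (hu1 : ∀ ξ : Rd d, 0 ≤ u1 ξ ∧ u1 ξ ≤ 1) (hu2 : ∀ ξ : Rd d, 0 ≤ u2 ξ ∧ u2 ξ ≤ 1)
    (ξ : Rd d) : ConstrV u1 u2 ξ ≤ 2 ^ d := by
  have hsum := constrV_summable (u2 := u2) h1 ξ
  have h2 : ConstrV u1 u2 ξ = ∑ k ∈ KS ξ, u1 (ξ - (2 * π) • zr k) * u2 (ξ - (2 * π) • zr k) :=
    tsum_eq_sum (fun k hk => term_zero h1 ξ k hk)
  rw [h2]
  have hic : ∀ i : Fin d, (Finset.Icc ⌈(ξ i - 3 * π / 2) / (2 * π)⌉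
      ⌊(ξ i + 3 * π / 2) / (2 * π)⌋).card ≤ 2 := by
    intro i
    rw [Int.card_Icc]
    have hπ : (0:ℝ) < 2 * π := by positivity
    have hfl : (⌊(ξ i + 3 * π / 2) / (2 * π)⌋ : ℝ) ≤ (ξ i + 3 * π / 2) / (2 * π) :=
      Int.floor_le _
    have hce : ((ξ i - 3 * π / 2) / (2 * π) : ℝ) ≤ ⌈(ξ i - 3 * π / 2) / (2 * π)⌉ :=
      Int.le_ceil _
    have hdiff : ((⌊(ξ i + 3 * π / 2) / (2 * π)⌋ : ℝ) - ⌈(ξ i - 3 * π / 2) / (2 * π)⌉) ≤ 3/2 := by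
      have heq : ((ξ i + 3 * π / 2) / (2 * π) : ℝ) - (ξ i - 3 * π / 2) / (2 * π) = 3/2 := by
        field_simp
        ring
      linarith
    have hint : ⌊(ξ i + 3 * π / 2) / (2 * π)⌋ - ⌈(ξ i - 3 * π / 2) / (2 * π)⌉ ≤ 1 := by
      have h15 : ((⌊(ξ i + 3 * π / 2) / (2 * π)⌋ - ⌈(ξ i - 3 * π / 2) / (2 * π)⌉ : ℤ) : ℝ) < 2 := by
        push_cast
        linarith
      exact_mod_cast Int.lt_add_one_iff.mp (by exact_mod_cast h15)
    omega
  have hcardn : (KS ξ).card ≤ 2 ^ d := by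
    rw [KS, Fintype.card_piFinset]
    calc ∏ i, (Finset.Icc ⌈(ξ i - 3 * π / 2) / (2 * π)⌉ ⌊(ξ i + 3 * π / 2) / (2 * π)⌋).card
        ≤ ∏ _i : Fin d, 2 := Finset.prod_le_prod' fun i _ => hic i
      _ = 2 ^ d := by simp
  calc ∑ k ∈ KS ξ, u1 (ξ - (2 * π) • zr k) * u2 (ξ - (2 * π) • zr k)
      ≤ ∑ _k ∈ KS ξ, (1:ℝ) := by
        refine Finset.sum_le_sum fun k _ => ?_
        exact mul_le_one₀ (hu1 _).2 (hu2 _).1 (hu2 _).2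
    _ = (KS ξ).card := by simp
    _ ≤ 2 ^ d := by exact_mod_cast hcardn
lemma hxpi : ∀ j : ℤ, Complex.exp (Complex.I * j * π) * Complex.exp (Complex.I * j * π) = 1 := by
  intro j
  rw [← Complex.exp_add]
  have := Complex.exp_int_mul_two_pi_mul_I j
  convert this using 2
  push_cast
  ring

def Acon (d : ℕ) : ℝ := ((2 * π) ^ (-(d : ℝ) / 2) / Real.sqrt (2 ^ d)) ^ 2 * (2 * π) ^ d

lemma Acon_pos (d : ℕ) : 0 < Acon d := by
  unfold Acon
  have h1 : (0:ℝ) < (2 * π) ^ (-(d : ℝ) / 2) := Real.rpow_pos_of_pos (by positivity) _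
  have h2 : (0:ℝ) < Real.sqrt (2 ^ d) := Real.sqrt_pos.mpr (by positivity)
  positivity

lemma lower {d : ℕ} (F : Hc d ≃ₗᵢ[ℂ] Hc d) (hF : IsFourier F) (φ0 : Hc d) (u w : Rd d → ℝ)
    (hform : (F φ0 : Rd d → ℂ) =ᵐ[volume]
      fun ξ => (((2 * π) ^ (-(d : ℝ) / 2) * u ξ / Real.sqrt (w ξ) : ℝ) : ℂ))
    (hu1 : ∀ ξ : Rd d, (∀ i, |ξ i| ≤ π) → u ξ = 1)
    (hw1 : ∀ ξ : Rd d, (∀ i, |ξ i| ≤ π) → 1 ≤ w ξ)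
    (hw2 : ∀ ξ : Rd d, w ξ ≤ 2 ^ d)
    (c : (Fin d → ℤ) →₀ ℂ) :
    Acon d * ∑ k ∈ c.support, ‖c k‖ ^ 2
      ≤ ∫ x : Rd d, ‖∑ k ∈ c.support, c k * tr (φ0 : Rd d → ℂ) 1 k x‖ ^ 2 := by
  classical
  set s := c.support with hs
  set c0 : ℝ := (2 * π) ^ (-(d : ℝ) / 2) / Real.sqrt (2 ^ d) with hc0
  have hc0pos : 0 < c0 := by
    rw [hc0]
    have h1 : (0:ℝ) < (2 * π) ^ (-(d : ℝ) / 2) := Real.rpow_pos_of_pos (by positivity) _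
    have h2 : (0:ℝ) < Real.sqrt (2 ^ d) := Real.sqrt_pos.mpr (by positivity)
    positivity
  set g : Hc d := ∑ k ∈ s, c k • (Tk k φ0) with hgdef
  -- coe of g
  have hterm : ∀ k : Fin d → ℤ, ((c k • Tk k φ0 : Hc d) : Rd d → ℂ) =ᵐ[volume]
      fun x => c k * (φ0 : Rd d → ℂ) (x - zr k) := by
    intro k
    refine (Lp.coeFn_smul (c k) (Tk k φ0)).trans ?_
    refine (Tk_coe k φ0).mono fun x hx => ?_
    simp only [Pi.smul_apply, hx, smul_eq_mul]
  have hae : ∀ᵐ x ∂(volume : Measure (Rd d)), ∀ k ∈ s,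
      ((c k • Tk k φ0 : Hc d) : Rd d → ℂ) x = c k * (φ0 : Rd d → ℂ) (x - zr k) :=
    (ae_ball_iff s.countable_toSet).mpr fun k _ => hterm k
  have hg : (g : Rd d → ℂ) =ᵐ[volume]
      fun x => ∑ k ∈ s, c k * (φ0 : Rd d → ℂ) (x - zr k) := by
    refine (coe_sum s _).trans ?_
    filter_upwards [hae] with x hx
    exact Finset.sum_congr rfl fun k hk => hx k hk
  have hRHS : ∫ x : Rd d, ‖∑ k ∈ s, c k * tr (φ0 : Rd d → ℂ) 1 k x‖ ^ 2 = ‖g‖ ^ 2 := by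
    rw [← normsq g]
    refine integral_congr_ae ?_
    filter_upwards [hg] with x hx
    rw [hx]
    congr 1
    congr 1
    exact Finset.sum_congr rfl fun k _ => by rw [tr_one]
  -- Fourier side
  have hFs : F g = ∑ k ∈ s, c k • Mk k (F φ0) := by
    rw [hgdef, map_sum]
    exact Finset.sum_congr rfl fun k _ => by rw [_root_.map_smul, key F hF φ0 k]
  have hterm2 : ∀ k : Fin d → ℤ, ((c k • Mk k (F φ0) : Hc d) : Rd d → ℂ) =ᵐ[volume]
      fun ξ => c k * (mfn k ξ * (F φ0 : Rd d → ℂ) ξ) := by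
    intro k
    refine (Lp.coeFn_smul (c k) (Mk k (F φ0))).trans ?_
    refine (Mk_coe k (F φ0)).mono fun ξ hξ => ?_
    simp only [Pi.smul_apply, hξ, smul_eq_mul]
  have hae2 : ∀ᵐ ξ ∂(volume : Measure (Rd d)), ∀ k ∈ s,
      ((c k • Mk k (F φ0) : Hc d) : Rd d → ℂ) ξ = c k * (mfn k ξ * (F φ0 : Rd d → ℂ) ξ) :=
    (ae_ball_iff s.countable_toSet).mpr fun k _ => hterm2 k
  have hFg : (F g : Rd d → ℂ) =ᵐ[volume]
      fun ξ => (∑ k ∈ s, c k * mfn k ξ) * (F φ0 : Rd d → ℂ) ξ := by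
    rw [hFs]
    refine (coe_sum s _).trans ?_
    filter_upwards [hae2] with ξ hξ
    rw [Finset.sum_congr rfl fun k hk => hξ k hk, Finset.sum_mul]
    exact Finset.sum_congr rfl fun k _ => by ring
  -- pointwise lower bound on the cube
  haveI : IsFiniteMeasure ((volume : Measure (Rd d)).restrict (Qr d π)) :=
    ⟨by rw [Measure.restrict_apply_univ]; exact Qr_vol_lt pi_pos.le⟩
  have hcontm : Continuous fun ξ : Rd d => ∑ k ∈ s, c k * mfn k ξ :=
    continuous_finset_sum s fun k _ => continuous_const.mul (mfn_cont k)
  have hintL : Integrable (fun ξ : Rd d => c0 ^ 2 * ‖∑ k ∈ s, c k * mfn k ξ‖ ^ 2)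
      ((volume : Measure (Rd d)).restrict (Qr d π)) := by
    refine (integrable_const (c0 ^ 2 * (∑ k ∈ s, ‖c k‖) ^ 2)).mono'
      ((continuous_const.mul ((hcontm.norm).pow 2)).aestronglyMeasurable) ?_
    filter_upwards with ξ
    have hb : ‖∑ k ∈ s, c k * mfn k ξ‖ ≤ ∑ k ∈ s, ‖c k‖ := by
      refine (norm_sum_le s _).trans ?_
      refine Finset.sum_le_sum fun k _ => ?_
      rw [norm_mul, mfn_norm, mul_one]
    have h0 : (0:ℝ) ≤ c0 ^ 2 * ‖∑ k ∈ s, c k * mfn k ξ‖ ^ 2 := by positivity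
    rw [Real.norm_eq_abs, _root_.abs_of_nonneg h0]
    have : ‖∑ k ∈ s, c k * mfn k ξ‖ ^ 2 ≤ (∑ k ∈ s, ‖c k‖) ^ 2 :=
      pow_le_pow_left₀ (norm_nonneg _) hb 2
    nlinarith [sq_nonneg c0]
  have hintR : Integrable (fun ξ : Rd d => ‖(F g : Rd d → ℂ) ξ‖ ^ 2)
      ((volume : Measure (Rd d)).restrict (Qr d π)) := (integrable_normsq (F g)).restrict
  have hpt : ∀ᵐ ξ ∂((volume : Measure (Rd d)).restrict (Qr d π)),
      c0 ^ 2 * ‖∑ k ∈ s, c k * mfn k ξ‖ ^ 2 ≤ ‖(F g : Rd d → ℂ) ξ‖ ^ 2 := by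
    filter_upwards [ae_restrict_of_ae hFg, ae_restrict_of_ae hform,
      ae_restrict_mem (Qr_meas (d := d) (r := π))] with ξ h1 h2 hmem
    have hξ : ∀ i, |ξ i| ≤ π := hmem
    rw [h1, norm_mul, mul_pow]
    have hval : c0 ≤ ‖(F φ0 : Rd d → ℂ) ξ‖ := by
      rw [h2]
      have hw1' := hw1 ξ hξ
      have hw2' := hw2 ξ
      have hsq : Real.sqrt (w ξ) ≤ Real.sqrt (2 ^ d) := Real.sqrt_le_sqrt hw2'
      have hsqpos : 0 < Real.sqrt (w ξ) := Real.sqrt_pos.mpr (by linarith)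
      have ha : (0:ℝ) < (2 * π) ^ (-(d : ℝ) / 2) := Real.rpow_pos_of_pos (by positivity) _
      simp only [Complex.norm_real, Real.norm_eq_abs]
      rw [hu1 ξ hξ, mul_one, _root_.abs_of_nonneg (by positivity)]
      rw [hc0]
      exact div_le_div_of_nonneg_left ha.le hsqpos hsq
    calc c0 ^ 2 * ‖∑ k ∈ s, c k * mfn k ξ‖ ^ 2
        ≤ ‖(F φ0 : Rd d → ℂ) ξ‖ ^ 2 * ‖∑ k ∈ s, c k * mfn k ξ‖ ^ 2 := by
          gcongr
      _ = ‖∑ k ∈ s, c k * mfn k ξ‖ ^ 2 * ‖(F φ0 : Rd d → ℂ) ξ‖ ^ 2 := by ring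
  -- main chain
  calc Acon d * ∑ k ∈ s, ‖c k‖ ^ 2
      = c0 ^ 2 * ((2 * π) ^ d * ∑ k ∈ s, ‖c k‖ ^ 2) := by rw [Acon, hc0]; ring
    _ = c0 ^ 2 * ∫ ξ in Qr d π, ‖∑ k ∈ s, c k * mfn k ξ‖ ^ 2 := by
        rw [cube_msq d π pi_pos.le hxpi s c]
    _ = ∫ ξ in Qr d π, c0 ^ 2 * ‖∑ k ∈ s, c k * mfn k ξ‖ ^ 2 := (integral_const_mul _ _).symm
    _ ≤ ∫ ξ in Qr d π, ‖(F g : Rd d → ℂ) ξ‖ ^ 2 := integral_mono_ae hintL hintR hpt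
    _ ≤ ∫ ξ : Rd d, ‖(F g : Rd d → ℂ) ξ‖ ^ 2 := by
        refine setIntegral_le_integral (integrable_normsq (F g)) ?_
        filter_upwards with ξ
        positivity
    _ = ‖F g‖ ^ 2 := normsq (F g)
    _ = ‖g‖ ^ 2 := by rw [F.norm_map]
    _ = ∫ x : Rd d, ‖∑ k ∈ s, c k * tr (φ0 : Rd d → ℂ) 1 k x‖ ^ 2 := hRHS.symm

end S5

/-- Lemma 2.13: lower Riesz bounds for finitely supported sequences. -/
theorem stmt5 (d : ℕ) (u1 u2 : Rd d → ℝ) (F : Hc d ≃ₗᵢ[ℂ] Hc d) (φ0 ψ0 : Hc d)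
    (hcon : Construction d u1 u2 F φ0 ψ0) :
    ∃ Aφ : ℝ, 0 < Aφ ∧ ∃ Aψ : ℝ, 0 < Aψ ∧ ∀ c : (Fin d → ℤ) →₀ ℂ,
      (Aφ * ∑ k ∈ c.support, ‖c k‖ ^ 2
        ≤ ∫ x : Rd d, ‖∑ k ∈ c.support, c k * tr (φ0 : Rd d → ℂ) 1 k x‖ ^ 2) ∧
      (Aψ * ∑ k ∈ c.support, ‖c k‖ ^ 2
        ≤ ∫ x : Rd d, ‖∑ k ∈ c.support, c k * tr (ψ0 : Rd d → ℂ) 1 k x‖ ^ 2) := by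
  obtain ⟨hFour, hsm1, hsm2, hcs1, hcs2, hb1, hb2, hone1, hone2, hts1, hts2, hfφ, hfψ⟩ := hcon
  refine ⟨S5.Acon d, S5.Acon_pos d, S5.Acon d, S5.Acon_pos d, fun c => ?_⟩
  have hw1 : ∀ ξ : Rd d, (∀ i, |ξ i| ≤ π) → 1 ≤ ConstrV u1 u2 ξ :=
    S5.constrV_ge_one hts1 (fun ξ => (hb1 ξ).1) (fun ξ => (hb2 ξ).1) hone1 hone2
  have hw2 : ∀ ξ : Rd d, ConstrV u1 u2 ξ ≤ 2 ^ d := S5.constrV_le hts1 hb1 hb2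
  exact ⟨S5.lower F hFour φ0 u1 (ConstrV u1 u2) hfφ hone1 hw1 hw2 c,
         S5.lower F hFour ψ0 u2 (ConstrV u1 u2) hfψ hone2 hw1 hw2 c⟩

end
end

section
/- Let G_0 satisfy Assumption C with parameters α, β and let γ = min{2α−1, 2α−β−1}. Then there exists C > 0 such that |(G_{0,h}(ξ)+1)^{−1} − (G_0(ξ)+1)^{−1}| ≤ C h^γ for all h > 0 and all ξ ∈ ℝ^d with hξ ∈ [−3π/2, 3π/2]^d. -/
/-!
`G0disc G0 h ξ = G0 η` with `η i = sinc (h ξ i / 2) * ξ i`. On the box `|h ξ i| ≤ 3π/2` the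
factors `sinc (h ξ i / 2)` lie in `[κ, 1]` with `κ = 1 - (3π/4)² / 6 > 0`, so every point of the
segment `[ξ, η]` has norm between `κ ‖ξ‖` and `‖ξ‖`, while `‖η - ξ‖ ≤ h² ‖ξ‖³ / 24`. The gradient
bound and the mean value theorem then give `|G0 η - G0 ξ| ≲ h² ‖ξ‖ ^ (β + 3)`.

Write `h² ‖ξ‖ ^ p = h ^ γ (h ‖ξ‖) ^ (2 - γ) ‖ξ‖ ^ (p - 2 + γ)`, where `h ‖ξ‖ ≲ √d` on the box. For
bounded `ξ` this already gives `≲ h ^ γ`, as `β + 1 + γ ≥ 0`. For large `ξ` the lower bound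
`G0 ≳ ‖·‖ ^ α`, applied at `ξ` and at `η`, divides by `‖ξ‖ ^ (2α)`, and `γ ≤ 2α - β - 1` makes the
power of `‖ξ‖` that is left nonpositive.
-/

open MeasureTheory Real Complex Filter

noncomputable section

namespace Real

lemma abs_sinc_sub_one_le (t : ℝ) : |sinc t - 1| ≤ t ^ 2 / 6 := by
  rcases eq_or_ne t 0 with rfl | ht
  · simp
  rw [sinc_of_ne_zero ht, div_sub_one ht, abs_div, abs_sub_comm, div_le_iff₀ (abs_pos.2 ht)]
  calc |t - sin t| ≤ |t| ^ 3 / 6 := abs_sub_sin_le t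
    _ = t ^ 2 / 6 * |t| := by rw [← sq_abs t]; ring

lemma one_sub_sq_div_six_le_sinc (t : ℝ) : 1 - t ^ 2 / 6 ≤ sinc t := by
  linarith [(abs_le.1 (abs_sinc_sub_one_le t)).1]

lemma two_div_mul_sin_eq_sinc_mul {h : ℝ} (hh : h ≠ 0) (x : ℝ) :
    2 / h * sin (h / 2 * x) = sinc (h / 2 * x) * x := by
  rcases eq_or_ne x 0 with rfl | hx
  · simp
  rw [sinc_of_ne_zero (by positivity)]
  field_simp

lemma rpow_le_max_rpow_one_mul {s x y β : ℝ} (hs : 0 < s) (hx : 0 < x) (hsy : s * x ≤ y)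
    (hyx : y ≤ x) : y ^ β ≤ max (s ^ β) 1 * x ^ β := by
  have hsx : 0 < s * x := mul_pos hs hx
  rcases le_total 0 β with hβ | hβ
  · calc y ^ β ≤ x ^ β := rpow_le_rpow (hsx.le.trans hsy) hyx hβ
      _ ≤ max (s ^ β) 1 * x ^ β := le_mul_of_one_le_left (by positivity) (le_max_right _ _)
  · calc y ^ β ≤ (s * x) ^ β := rpow_le_rpow_of_nonpos hsx hsy hβ
      _ = s ^ β * x ^ β := mul_rpow hs.le hx.le
      _ ≤ max (s ^ β) 1 * x ^ β := by gcongr; exact le_max_left _ _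

lemma sq_mul_rpow_le {h x B γ p : ℝ} (hh : 0 < h) (hx : 0 < x) (hγ : γ ≤ 2) (hB : h * x ≤ B) :
    h ^ 2 * x ^ p ≤ B ^ (2 - γ) * x ^ (p - 2 + γ) * h ^ γ := by
  calc h ^ 2 * x ^ p = h ^ ((2 - γ) + γ) * x ^ ((2 - γ) + (p - 2 + γ)) := by
        rw [show (2 - γ) + γ = (2 : ℝ) by ring, show (2 - γ) + (p - 2 + γ) = p by ring, rpow_two]
    _ = (h * x) ^ (2 - γ) * x ^ (p - 2 + γ) * h ^ γ := by
        rw [rpow_add hh, rpow_add hx, mul_rpow hh.le hx.le]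
        ring
    _ ≤ B ^ (2 - γ) * x ^ (p - 2 + γ) * h ^ γ := by gcongr

end Real

namespace EuclideanSpace

variable {ι : Type*} [Fintype ι]

lemma norm_le_norm_of_abs_apply_le {v w : EuclideanSpace ℝ ι} (hvw : ∀ i, |v i| ≤ |w i|) :
    ‖v‖ ≤ ‖w‖ := by
  rw [EuclideanSpace.norm_eq, EuclideanSpace.norm_eq]
  gcongr with i
  simpa only [Real.norm_eq_abs] using hvw i

lemma norm_le_sqrt_card_mul {v : EuclideanSpace ℝ ι} {M : ℝ} (hM : 0 ≤ M) (hv : ∀ i, |v i| ≤ M) :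
    ‖v‖ ≤ √(Fintype.card ι) * M := by
  calc ‖v‖ = √(∑ i, ‖v i‖ ^ 2) := EuclideanSpace.norm_eq v
    _ ≤ √(∑ _i : ι, M ^ 2) := by
      gcongr with i
      simpa only [Real.norm_eq_abs] using hv i
    _ = √(Fintype.card ι) * M := by
      rw [Finset.sum_const, Finset.card_univ, nsmul_eq_mul, Real.sqrt_mul (Nat.cast_nonneg _),
        Real.sqrt_sq hM]

lemma norm_mem_Icc_of_apply_eq_mul {κ : ℝ} (hκ : 0 ≤ κ) {v w : EuclideanSpace ℝ ι}
    (μ : ι → ℝ) (hμ : ∀ i, μ i ∈ Set.Icc κ 1) (hv : ∀ i, v i = μ i * w i) :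
    ‖v‖ ∈ Set.Icc (κ * ‖w‖) ‖w‖ := by
  have habs : ∀ i, |v i| = μ i * |w i| := fun i => by
    rw [hv, abs_mul, abs_of_nonneg (hκ.trans (hμ i).1)]
  constructor
  · rw [← abs_of_nonneg hκ, ← Real.norm_eq_abs, ← norm_smul]
    refine norm_le_norm_of_abs_apply_le fun i => ?_
    rw [PiLp.smul_apply, smul_eq_mul, abs_mul, abs_of_nonneg hκ, habs]
    exact mul_le_mul_of_nonneg_right (hμ i).1 (abs_nonneg _)
  · refine norm_le_norm_of_abs_apply_le fun i => ?_
    rw [habs]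
    exact mul_le_of_le_one_left (abs_nonneg _) (hμ i).2

end EuclideanSpace

lemma abs_inv_add_one_sub_inv_add_one_le {a b m : ℝ} (hm : 0 ≤ m) (ha : m ≤ a) (hb : m ≤ b) :
    |(a + 1)⁻¹ - (b + 1)⁻¹| ≤ |a - b| / (m + 1) ^ 2 := by
  have ha1 : 0 < a + 1 := by linarith
  have hb1 : 0 < b + 1 := by linarith
  rw [inv_sub_inv ha1.ne' hb1.ne', abs_div, abs_of_pos (mul_pos ha1 hb1),
    add_sub_add_right_eq_sub, abs_sub_comm]
  exact div_le_div_of_nonneg_left (abs_nonneg _) (by positivity) (by nlinarith)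

lemma abs_inv_add_one_sub_inv_add_one_le_rpow {a b x h K c R B α β γ : ℝ}
    (hx : 0 < x) (hh : 0 < h) (hK : 0 ≤ K) (hc : 0 < c) (hR : 1 ≤ R) (hB : h * x ≤ B)
    (hγ : γ ≤ 2) (hγβ : 0 ≤ β + 1 + γ) (hγα : β + 1 + γ ≤ 2 * α)
    (ha : 0 ≤ a) (hb : 0 ≤ b) (hab : |a - b| ≤ K * h ^ 2 * x ^ (β + 3))
    (hlow : R ≤ x → c * x ^ α ≤ a ∧ c * x ^ α ≤ b) :
    |(a + 1)⁻¹ - (b + 1)⁻¹| ≤ K * B ^ (2 - γ) * (R ^ (β + 1 + γ) + (c ^ 2)⁻¹) * h ^ γ := by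
  have hB0 : 0 ≤ B := (by positivity : 0 ≤ h * x).trans hB
  rcases le_or_gt x R with hxR | hRx
  · have hint := sq_mul_rpow_le (p := β + 3) hh hx hγ hB
    rw [show β + 3 - 2 + γ = β + 1 + γ by ring] at hint
    calc |(a + 1)⁻¹ - (b + 1)⁻¹| ≤ |a - b| / (0 + 1) ^ 2 :=
          abs_inv_add_one_sub_inv_add_one_le le_rfl ha hb
      _ ≤ K * (h ^ 2 * x ^ (β + 3)) := by rw [← mul_assoc]; simpa using hab
      _ ≤ K * (B ^ (2 - γ) * R ^ (β + 1 + γ) * h ^ γ) :=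
          mul_le_mul_of_nonneg_left (hint.trans (by gcongr)) hK
      _ = K * B ^ (2 - γ) * R ^ (β + 1 + γ) * h ^ γ := by ring
      _ ≤ K * B ^ (2 - γ) * (R ^ (β + 1 + γ) + (c ^ 2)⁻¹) * h ^ γ := by
          gcongr
          exact le_add_of_nonneg_right (by positivity)
  · obtain ⟨hca, hcb⟩ := hlow hRx.le
    have hint := sq_mul_rpow_le (p := β + 3 - 2 * α) hh hx hγ hB
    have hxpow : x ^ (β + 3 - 2 * α - 2 + γ) ≤ 1 :=
      rpow_le_one_of_one_le_of_nonpos (hR.trans hRx.le) (by linarith)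
    have hdenom : (c * x ^ α) ^ 2 = c ^ 2 * x ^ (2 * α) := by
      rw [mul_pow, ← rpow_natCast (x ^ α), ← rpow_mul hx.le]
      ring_nf
    calc |(a + 1)⁻¹ - (b + 1)⁻¹| ≤ |a - b| / (c * x ^ α + 1) ^ 2 :=
          abs_inv_add_one_sub_inv_add_one_le (by positivity) hca hcb
      _ ≤ K * h ^ 2 * x ^ (β + 3) / (c * x ^ α) ^ 2 := by gcongr; linarith
      _ = K * (c ^ 2)⁻¹ * (h ^ 2 * x ^ (β + 3 - 2 * α)) := by
          rw [hdenom, rpow_sub hx]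
          field_simp
      _ ≤ K * (c ^ 2)⁻¹ * (B ^ (2 - γ) * 1 * h ^ γ) :=
          mul_le_mul_of_nonneg_left (hint.trans (by gcongr)) (by positivity)
      _ = K * B ^ (2 - γ) * (c ^ 2)⁻¹ * h ^ γ := by ring
      _ ≤ K * B ^ (2 - γ) * (R ^ (β + 1 + γ) + (c ^ 2)⁻¹) * h ^ γ := by
          gcongr
          exact le_add_of_nonneg_left (by positivity)

def sincLowerBound : ℝ := 1 - (3 * π / 4) ^ 2 / 6

lemma sincLowerBound_pos : 0 < sincLowerBound := by
  have := pi_lt_d2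
  have := pi_pos
  unfold sincLowerBound
  nlinarith

lemma sincLowerBound_le_one : sincLowerBound ≤ 1 := by
  unfold sincLowerBound
  linarith [sq_nonneg (3 * π / 4)]

lemma sincLowerBound_le_sinc {t : ℝ} (ht : |t| ≤ 3 * π / 4) : sincLowerBound ≤ sinc t := by
  refine le_trans ?_ (one_sub_sq_div_six_le_sinc t)
  rw [sincLowerBound, ← sq_abs t]
  gcongr

def discFreq {d : ℕ} (h : ℝ) (ξ : Rd d) : Rd d :=
  WithLp.toLp 2 (fun i => 2 / h * Real.sin (h / 2 * ξ i))

lemma G0disc_eq {d : ℕ} (G0 : Rd d → ℝ) (h : ℝ) (ξ : Rd d) :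
    G0disc G0 h ξ = G0 (discFreq h ξ) := rfl

lemma discFreq_zero {d : ℕ} (h : ℝ) : discFreq h (0 : Rd d) = 0 := by
  ext i
  simp [discFreq]

lemma discFreq_apply {d : ℕ} {h : ℝ} (hh : h ≠ 0) (ξ : Rd d) (i : Fin d) :
    discFreq h ξ i = sinc (h / 2 * ξ i) * ξ i :=
  two_div_mul_sin_eq_sinc_mul hh (ξ i)

lemma norm_discFreq_sub_le {d : ℕ} {h : ℝ} (hh : h ≠ 0) (ξ : Rd d) :
    ‖discFreq h ξ - ξ‖ ≤ h ^ 2 * ‖ξ‖ ^ 2 / 24 * ‖ξ‖ := by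
  rw [← abs_of_nonneg (by positivity : 0 ≤ h ^ 2 * ‖ξ‖ ^ 2 / 24), ← Real.norm_eq_abs,
    ← norm_smul]
  refine EuclideanSpace.norm_le_norm_of_abs_apply_le fun i => ?_
  have hξi : ξ i ^ 2 ≤ ‖ξ‖ ^ 2 := by
    rw [← sq_abs]
    exact pow_le_pow_left₀ (abs_nonneg _) (by simpa using PiLp.norm_apply_le ξ i) 2
  rw [PiLp.sub_apply, discFreq_apply hh, ← sub_one_mul, PiLp.smul_apply, smul_eq_mul, abs_mul,
    abs_mul, abs_of_nonneg (by positivity : 0 ≤ h ^ 2 * ‖ξ‖ ^ 2 / 24)]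
  gcongr
  calc |sinc (h / 2 * ξ i) - 1| ≤ (h / 2 * ξ i) ^ 2 / 6 := abs_sinc_sub_one_le _
    _ = h ^ 2 * ξ i ^ 2 / 24 := by ring
    _ ≤ h ^ 2 * ‖ξ‖ ^ 2 / 24 := by gcongr

lemma norm_mem_Icc_of_mem_segment_discFreq {d : ℕ} {h : ℝ} (hh : 0 < h) {ξ ζ : Rd d}
    (hbox : ∀ i, |h * ξ i| ≤ 3 * π / 2) (hζ : ζ ∈ segment ℝ ξ (discFreq h ξ)) :
    ‖ζ‖ ∈ Set.Icc (sincLowerBound * ‖ξ‖) ‖ξ‖ := by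
  obtain ⟨a, b, ha, hb, hab, rfl⟩ := hζ
  refine EuclideanSpace.norm_mem_Icc_of_apply_eq_mul sincLowerBound_pos.le
    (fun i => a + b * sinc (h / 2 * ξ i)) (fun i => ?_) (fun i => ?_)
  · have hsinc : sincLowerBound ≤ sinc (h / 2 * ξ i) := by
      refine sincLowerBound_le_sinc ?_
      rw [show h / 2 * ξ i = h * ξ i / 2 by ring, abs_div, abs_two]
      linarith [hbox i]
    have := sinc_le_one (h / 2 * ξ i)
    have := sincLowerBound_le_one
    constructor <;> nlinarith
  · simp [discFreq_apply hh.ne']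
    ring

lemma abs_G0disc_sub_le {d : ℕ} {G : Rd d → ℝ} (hG : Differentiable ℝ G) {c β : ℝ} (hc : 0 ≤ c)
    (hgrad : ∀ ζ, ‖fderiv ℝ G ζ‖ ≤ c * ‖ζ‖ ^ β) {h : ℝ} (hh : 0 < h) {ξ : Rd d} (hξ : ξ ≠ 0)
    (hbox : ∀ i, |h * ξ i| ≤ 3 * π / 2) :
    |G0disc G h ξ - G ξ| ≤ c * max (sincLowerBound ^ β) 1 / 24 * h ^ 2 * ‖ξ‖ ^ (β + 3) := by
  have hξ' : 0 < ‖ξ‖ := norm_pos_iff.2 hξ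
  have hfderiv : ∀ ζ ∈ segment ℝ ξ (discFreq h ξ),
      ‖fderiv ℝ G ζ‖ ≤ c * max (sincLowerBound ^ β) 1 * ‖ξ‖ ^ β := fun ζ hζ => by
    obtain ⟨hlow, hup⟩ := norm_mem_Icc_of_mem_segment_discFreq hh hbox hζ
    rw [mul_assoc]
    exact (hgrad ζ).trans (mul_le_mul_of_nonneg_left
      (rpow_le_max_rpow_one_mul sincLowerBound_pos hξ' hlow hup) hc)
  have hmvt := (convex_segment ξ (discFreq h ξ)).norm_image_sub_le_of_norm_fderiv_le
    (fun ζ _ => hG ζ) hfderiv (left_mem_segment ℝ _ _) (right_mem_segment ℝ _ _)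
  calc |G0disc G h ξ - G ξ|
      ≤ c * max (sincLowerBound ^ β) 1 * ‖ξ‖ ^ β * ‖discFreq h ξ - ξ‖ := hmvt
    _ ≤ c * max (sincLowerBound ^ β) 1 * ‖ξ‖ ^ β * (h ^ 2 * ‖ξ‖ ^ 2 / 24 * ‖ξ‖) := by
        gcongr
        exact norm_discFreq_sub_le hh.ne' ξ
    _ = c * max (sincLowerBound ^ β) 1 / 24 * h ^ 2 * ‖ξ‖ ^ (β + 3) := by
        rw [rpow_add hξ', show (3 : ℝ) = (3 : ℕ) by norm_num, rpow_natCast]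
        ring

lemma exists_le_G0disc_and_G0 {d : ℕ} {G0 : Rd d → ℝ} {α β : ℝ} (hC : AssumptionC d G0 α β) :
    ∃ c > 0, ∃ R ≥ 1, ∀ h > 0, ∀ ξ : Rd d, (∀ i, |h * ξ i| ≤ 3 * π / 2) → R ≤ ‖ξ‖ →
      c * ‖ξ‖ ^ α ≤ G0disc G0 h ξ ∧ c * ‖ξ‖ ^ α ≤ G0 ξ := by
  obtain ⟨c, hc, c0, -, hlow⟩ := hC.lower
  have hκ := sincLowerBound_pos
  refine ⟨c * sincLowerBound ^ α, by positivity, max (c0 / sincLowerBound) 1, le_max_right _ _,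
    fun h hh ξ hbox hR => ?_⟩
  have hc0 : c0 ≤ sincLowerBound * ‖ξ‖ := by
    rw [← div_le_iff₀' hκ]
    exact (le_max_left _ _).trans hR
  have key : ∀ ζ : Rd d, sincLowerBound * ‖ξ‖ ≤ ‖ζ‖ → c * sincLowerBound ^ α * ‖ξ‖ ^ α ≤ G0 ζ :=
    fun ζ hζ => calc
      c * sincLowerBound ^ α * ‖ξ‖ ^ α = c * (sincLowerBound * ‖ξ‖) ^ α := by
        rw [mul_rpow hκ.le (norm_nonneg _), mul_assoc]
      _ ≤ c * ‖ζ‖ ^ α := by gcongr; linarith [hC.halpha]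
      _ ≤ G0 ζ := hlow ζ (hc0.trans hζ)
  exact ⟨key _ (norm_mem_Icc_of_mem_segment_discFreq hh hbox (right_mem_segment ℝ _ _)).1,
    key ξ (mul_le_of_le_one_left (norm_nonneg _) sincLowerBound_le_one)⟩

/-- Lemma 3.5. -/
theorem stmt8 (d : ℕ) (G0 : Rd d → ℝ) (α β : ℝ) (hC : AssumptionC d G0 α β) :
    ∃ C : ℝ, 0 < C ∧ ∀ h : ℝ, 0 < h → ∀ ξ : Rd d, (∀ i, |h * ξ i| ≤ 3 * π / 2) →
      |(G0disc G0 h ξ + 1)⁻¹ - (G0 ξ + 1)⁻¹|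
        ≤ C * h ^ (min (2 * α - 1) (2 * α - β - 1)) := by
  obtain ⟨cg, hcg, hgrad⟩ := hC.grad
  obtain ⟨c, hc, R, hR, hlow⟩ := exists_le_G0disc_and_G0 hC
  set K := cg * max (sincLowerBound ^ β) 1 / 24
  set γ := min (2 * α - 1) (2 * α - β - 1)
  set B := √d * (3 * π / 2) + 1 with hB_def
  have hγ : γ ≤ 2 := (min_le_right _ _).trans (by linarith [hC.hab3])
  have hγβ : 0 ≤ β + 1 + γ := by
    have : -(β + 1) ≤ γ := le_min (by linarith [hC.halpha, hC.hbeta]) (by linarith [hC.halpha])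
    linarith
  have hγα : β + 1 + γ ≤ 2 * α := by linarith [min_le_right (2 * α - 1) (2 * α - β - 1)]
  refine ⟨K * B ^ (2 - γ) * (R ^ (β + 1 + γ) + (c ^ 2)⁻¹), by positivity, fun h hh ξ hbox => ?_⟩
  rcases eq_or_ne ξ 0 with rfl | hξ
  · simp only [G0disc_eq, discFreq_zero, sub_self, abs_zero]
    positivity
  have hB : h * ‖ξ‖ ≤ B := by
    have := EuclideanSpace.norm_le_sqrt_card_mul (v := h • ξ) (M := 3 * π / 2) (by positivity)
      (fun i => by simpa using hbox i)
    rw [norm_smul, Real.norm_of_nonneg hh.le, Fintype.card_fin] at this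
    linarith [hB_def]
  exact abs_inv_add_one_sub_inv_add_one_le_rpow (norm_pos_iff.2 hξ) hh (by positivity) hc hR hB
    hγ hγβ hγα (hC.nonneg _) (hC.nonneg _)
    (abs_G0disc_sub_le (hC.smooth.differentiable one_ne_zero) hcg.le hgrad hh hξ hbox)
    (hlow h hh ξ hbox)
end
end

section
/- Let 𝒦 be a complex Banach space and A_1, A_2 ∈ 𝓑(𝒦). Assume there exists a constant C > 0 such that for j = 1, 2 and all z in the resolvent set ρ(A_j) one has ‖(A_j − zI)^{−1}‖_{𝓑(𝒦)} ≤ C / dist(z, σ(A_j)). Then the Hausdorff distance between the spectra satisfies d_H(σ(A_1), σ(A_2)) ≤ C ‖A_1 − A_2‖_{𝓑(𝒦)}. -/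
open MeasureTheory Real Complex Filter

noncomputable section

lemma stmt16_aux {𝒦 : Type*} [NormedAddCommGroup 𝒦] [NormedSpace ℂ 𝒦] [CompleteSpace 𝒦]
    (A B : 𝒦 →L[ℂ] 𝒦) (C : ℝ) (hC : 0 < C)
    (hB : ∀ z : ℂ, z ∉ spectrum ℂ B →
      ‖Ring.inverse (algebraMap ℂ (𝒦 →L[ℂ] 𝒦) z - B)‖
        ≤ C / Metric.infDist z (spectrum ℂ B)) :
    ∀ z ∈ spectrum ℂ A, Metric.infDist z (spectrum ℂ B) ≤ C * ‖A - B‖ := by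
  intro z hz
  by_contra hlt
  push_neg at hlt
  set d := Metric.infDist z (spectrum ℂ B) with hd
  have hdpos : 0 < d := lt_of_le_of_lt (by positivity) hlt
  have hzB : z ∉ spectrum ℂ B := by
    intro hmem
    have : d = 0 := Metric.infDist_zero_of_mem hmem
    simp [this] at hdpos
  have hu : IsUnit (algebraMap ℂ (𝒦 →L[ℂ] 𝒦) z - B) := spectrum.notMem_iff.mp hzB
  set R := Ring.inverse (algebraMap ℂ (𝒦 →L[ℂ] 𝒦) z - B) with hR
  have hRnorm : ‖R‖ ≤ C / d := hB z hzB
  set t := R * (A - B) with ht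
  have htnorm : ‖t‖ < 1 := by
    calc ‖t‖ ≤ ‖R‖ * ‖A - B‖ := norm_mul_le _ _
      _ ≤ (C / d) * ‖A - B‖ := by
          apply mul_le_mul_of_nonneg_right hRnorm (norm_nonneg _)
      _ = (C * ‖A - B‖) / d := by ring
      _ < 1 := (div_lt_one hdpos).mpr hlt
  have hu2 : IsUnit ((1 : 𝒦 →L[ℂ] 𝒦) - t) := (Units.oneSub t htnorm).isUnit
  have key : (algebraMap ℂ (𝒦 →L[ℂ] 𝒦) z - B) * ((1 : 𝒦 →L[ℂ] 𝒦) - t) =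
      algebraMap ℂ (𝒦 →L[ℂ] 𝒦) z - A := by
    have hcancel : (algebraMap ℂ (𝒦 →L[ℂ] 𝒦) z - B) * R = 1 := Ring.mul_inverse_cancel _ hu
    rw [ht, mul_sub, mul_one, ← mul_assoc, hcancel, one_mul]
    abel
  have : IsUnit (algebraMap ℂ (𝒦 →L[ℂ] 𝒦) z - A) := key ▸ hu.mul hu2
  exact spectrum.notMem_iff.mpr this hz

/-- Lemma 5.1. -/
theorem stmt16 {𝒦 : Type*} [NormedAddCommGroup 𝒦] [NormedSpace ℂ 𝒦] [CompleteSpace 𝒦]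
    (A1 A2 : 𝒦 →L[ℂ] 𝒦) (C : ℝ) (hC : 0 < C)
    (h1 : ∀ z : ℂ, z ∉ spectrum ℂ A1 →
      ‖Ring.inverse (algebraMap ℂ (𝒦 →L[ℂ] 𝒦) z - A1)‖
        ≤ C / Metric.infDist z (spectrum ℂ A1))
    (h2 : ∀ z : ℂ, z ∉ spectrum ℂ A2 →
      ‖Ring.inverse (algebraMap ℂ (𝒦 →L[ℂ] 𝒦) z - A2)‖
        ≤ C / Metric.infDist z (spectrum ℂ A2)) :
    Metric.hausdorffDist (spectrum ℂ A1) (spectrum ℂ A2) ≤ C * ‖A1 - A2‖ := by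
  apply Metric.hausdorffDist_le_of_infDist (by positivity)
  · exact stmt16_aux A1 A2 C hC h2
  · intro x hx
    have := stmt16_aux A2 A1 C hC h1 x hx
    rwa [norm_sub_rev] at this

end
end
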